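/- The rotate-and-sum procedure correctly sums strided groups: let N = 2^t, m = 2^s with s ≤ t, and let c ∈ ℝ^N. Define the sequence c^{(0)} = c and c^{(l+1)}_j = c^{(l)}_j + c^{(l)}_{(j + m·2^l) mod N}. Then after t − s steps, for each j < m, c^{(t−s)}_j = Σ_{q=0}^{N/m − 1} c_{j + q·m}. -/

import Mathlib

/-!
By induction on `l`, slot `j` after `l` steps holds the sum of the `2 ^ l` input slots
`j, j + m, …, j + (2 ^ l - 1) m` (indices mod `N`): the rotation by `m 2 ^ l` brings in exactly
the next `2 ^ l` of them. With `l = t - s` these are the `N / m` slots of the residue class of `j`.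
-/

open Finset

theorem rotateAndSum_eq_sum_range {M : Type*} [AddCommMonoid M] {n : ℕ} (hn : 0 < n) (m : ℕ)
    (cs : ℕ → Fin n → M)
    (hstep : ∀ (l : ℕ) (j : Fin n),
      cs (l + 1) j = cs l j + cs l ⟨((j : ℕ) + m * 2 ^ l) % n, Nat.mod_lt _ hn⟩)
    (l : ℕ) (j : Fin n) :
    cs l j = ∑ q ∈ range (2 ^ l), cs 0 ⟨((j : ℕ) + q * m) % n, Nat.mod_lt _ hn⟩ := by
  induction l generalizing j with
  | zero => simp [Nat.mod_eq_of_lt j.isLt]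
  | succ l ih =>
    rw [hstep, ih, ih, pow_succ, mul_two, sum_range_add]
    congr 1
    refine sum_congr rfl fun q _ => congr_arg _ (Fin.ext ?_)
    change (((j : ℕ) + m * 2 ^ l) % n + q * m) % n = ((j : ℕ) + (2 ^ l + q) * m) % n
    rw [Nat.mod_add_mod]
    ring_nf

/-- Rotate-and-sum correctness: with `N = 2^t` slots and stride `m = 2^s`, after
`t − s` rotate-and-add steps each of the first `m` slots holds the sum of its
residue class modulo `m`. -/
theorem stmt_13 (t s : ℕ) (hst : s ≤ t) (c : Fin (2 ^ t) → ℝ)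
    (cs : ℕ → Fin (2 ^ t) → ℝ) (h0 : cs 0 = c)
    (hstep : ∀ (l : ℕ) (j : Fin (2 ^ t)),
      cs (l + 1) j = cs l j +
        cs l ⟨((j : ℕ) + 2 ^ s * 2 ^ l) % 2 ^ t, Nat.mod_lt _ (Nat.two_pow_pos t)⟩) :
    ∀ j : Fin (2 ^ t), (j : ℕ) < 2 ^ s →
      cs (t - s) j = ∑ q : Fin (2 ^ t / 2 ^ s),
        c ⟨((j : ℕ) + (q : ℕ) * 2 ^ s) % 2 ^ t, Nat.mod_lt _ (Nat.two_pow_pos t)⟩ := by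
  intro j _
  rw [rotateAndSum_eq_sum_range (Nat.two_pow_pos t) (2 ^ s) cs hstep, h0,
    Nat.pow_div hst two_pos, Fin.sum_univ_eq_sum_range
      (fun q => c ⟨((j : ℕ) + q * 2 ^ s) % 2 ^ t, Nat.mod_lt _ (Nat.two_pow_pos t)⟩)]
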